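/- 𝒳 is exactly the subgroup of GL(2,ℤ) generated by the three order-2 matrices f₀ = [[1,2],[0,−1]], f₁ = [[0,1],[1,0]], and r̄₁ = [[−1,0],[0,1]]: every matrix in GL(2,ℤ) with both column sums odd is a product of copies of these three matrices, and conversely every such product has both column sums odd. -/

import Mathlib

open Matrix

/-- Membership in `𝒳`: both column sums of `g` are odd. -/
def memX (g : Matrix.GeneralLinearGroup (Fin 2) ℤ) : Prop :=
  ((↑g : Matrix (Fin 2) (Fin 2) ℤ) 0 0 + (↑g : Matrix (Fin 2) (Fin 2) ℤ) 1 0) % 2 = 1 ∧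
  ((↑g : Matrix (Fin 2) (Fin 2) ℤ) 0 1 + (↑g : Matrix (Fin 2) (Fin 2) ℤ) 1 1) % 2 = 1

/-- `f₀ = [[1,2],[0,−1]]` as an element of `GL(2,ℤ)`. -/
def f0U : Matrix.GeneralLinearGroup (Fin 2) ℤ :=
  ⟨!![1, 2; 0, -1], !![1, 2; 0, -1], by decide, by decide⟩

/-- `f₁ = [[0,1],[1,0]]` as an element of `GL(2,ℤ)`. -/
def f1U : Matrix.GeneralLinearGroup (Fin 2) ℤ :=
  ⟨!![0, 1; 1, 0], !![0, 1; 1, 0], by decide, by decide⟩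

/-- `τ₁² = [[1,2],[0,1]]` as an element of `GL(2,ℤ)`. -/
def tau1sqU : Matrix.GeneralLinearGroup (Fin 2) ℤ :=
  ⟨!![1, 2; 0, 1], !![1, -2; 0, 1], by decide, by decide⟩

/-- `τ₂² = [[1,0],[−2,1]]` as an element of `GL(2,ℤ)`. -/
def tau2sqU : Matrix.GeneralLinearGroup (Fin 2) ℤ :=
  ⟨!![1, 0; -2, 1], !![1, 0; 2, 1], by decide, by decide⟩

/-- `r̄₁ = [[−1,0],[0,1]]` as an element of `GL(2,ℤ)`. -/
def rbar1U : Matrix.GeneralLinearGroup (Fin 2) ℤ :=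
  ⟨!![-1, 0; 0, 1], !![-1, 0; 0, 1], by decide, by decide⟩

/-- `r̄₂ = [[1,0],[0,−1]]` as an element of `GL(2,ℤ)`. -/
def rbar2U : Matrix.GeneralLinearGroup (Fin 2) ℤ :=
  ⟨!![1, 0; 0, -1], !![1, 0; 0, -1], by decide, by decide⟩

/-!
Reduction mod 2 identifies `𝒳` with the preimage of the stabiliser of the row vector `(1, 1)` in
`GL(2, 𝔽₂)`, so `𝒳` is a subgroup, and it contains the three generators. Conversely, the closure
contains `f₁`, `r̄₁` and `τ₁² = f₁ r̄₁ f₁ f₀`. Left multiplication by `f₁ τ₁^{2k}` replaces the lower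
left entry `c` of `g ∈ 𝒳` by `a + 2kc`, and since `a + c` is odd, `k` can be chosen with
`|a + 2kc| < |c|`. This descent ends at an upper triangular matrix, which is `diag(±1, ±1)` times a
power of `τ₁²`.
-/

namespace Matrix.GeneralLinearGroup

def vecMulStabilizer {n R : Type*} [Fintype n] [DecidableEq n] [CommRing R] (v : n → R) :
    Subgroup (GL n R) where
  carrier := {g | v ᵥ* (g : Matrix n n R) = v}
  mul_mem' {g h} (hg : v ᵥ* _ = v) (hh : v ᵥ* _ = v) := by
    rw [Set.mem_ofPred, coe_mul, ← vecMul_vecMul, hg, hh]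
  one_mem' := vecMul_one v
  inv_mem' {g} (hg : v ᵥ* _ = v) :=
    calc v ᵥ* (↑g⁻¹ : Matrix n n R) = (v ᵥ* (g : Matrix n n R)) ᵥ* (↑g⁻¹ : Matrix n n R) := by
          rw [hg]
      _ = v := by rw [vecMul_vecMul, ← coe_mul, mul_inv_cancel, coe_one, vecMul_one]

theorem isUnit_diag_of_apply_one_zero_eq_zero {R : Type*} [CommRing R] {g : GL (Fin 2) R}
    (hc : g 1 0 = 0) : IsUnit (g 0 0) ∧ IsUnit (g 1 1) := by
  have hdet : IsUnit (g 0 0 * g 1 1) := by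
    simpa [val_det_apply, det_fin_two, hc] using (det g).isUnit
  rwa [IsUnit.mul_iff] at hdet

end Matrix.GeneralLinearGroup

namespace GL2OddColumns

open Matrix.GeneralLinearGroup

def oddColumnSums : Subgroup (GL (Fin 2) ℤ) :=
  (vecMulStabilizer (1 : Fin 2 → ZMod 2)).comap (map (Int.castRingHom (ZMod 2)))

theorem mem_oddColumnSums_iff (g : GL (Fin 2) ℤ) : g ∈ oddColumnSums ↔ memX g := by
  simp only [oddColumnSums, vecMulStabilizer, Subgroup.mem_comap, Subgroup.mem_mk,
    Submonoid.mem_mk, Subsemigroup.mem_mk, Set.mem_ofPred, funext_iff, Fin.forall_fin_two,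
    vecMul, dotProduct, Fin.sum_univ_two, Matrix.GeneralLinearGroup.map_apply, Pi.one_apply,
    one_mul, eq_intCast, ← Int.cast_add, ZMod.intCast_eq_one_iff_odd, Int.odd_iff, memX]

theorem coe_tau1sqU_zpow (k : ℤ) :
    ((tau1sqU ^ k : GL (Fin 2) ℤ) : Matrix (Fin 2) (Fin 2) ℤ) = !![1, 2 * k; 0, 1] := by
  have h : tau1sqU = SpecialLinearGroup.toGL (ModularGroup.T ^ (2 : ℤ)) := by
    ext i j; fin_cases i <;> fin_cases j <;> rfl
  rw [h, ← map_zpow, ← _root_.zpow_mul, ← ModularGroup.coe_T_zpow]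
  rfl

theorem f1U_mul_tau1sqU_zpow_mul_apply_one_zero (g : GL (Fin 2) ℤ) (k : ℤ) :
    (f1U * tau1sqU ^ k * g) 1 0 = g 0 0 + 2 * k * g 1 0 := by
  rw [coe_mul, coe_mul, coe_tau1sqU_zpow]
  simp [f1U, Matrix.mul_apply, Fin.sum_univ_two]

theorem exists_natAbs_add_two_mul_mul_lt {a c : ℤ} (hc : c ≠ 0) (hac : (a + c) % 2 = 1) :
    ∃ k : ℤ, (a + 2 * k * c).natAbs < c.natAbs := by
  obtain ⟨r, q, hr, rfl⟩ :
      ∃ r q : ℤ, (0 ≤ r ∧ r < 2 * c.natAbs ∧ (r + c) % 2 = 1) ∧ a = r + 2 * c * q := by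
    refine ⟨a % (2 * c), a / (2 * c), ⟨Int.emod_nonneg _ (by omega), ?_, ?_⟩,
      (Int.emod_add_mul_ediv a _).symm⟩
    · have := Int.emod_lt_abs a (b := 2 * c) (by omega)
      rw [Int.abs_eq_natAbs] at this
      omega
    · have := Int.emod_emod_of_dvd a (dvd_mul_right 2 c)
      omega
  suffices ∃ e : ℤ, (r + 2 * e * c).natAbs < c.natAbs by
    obtain ⟨e, he⟩ := this
    exact ⟨e - q, by rwa [show r + 2 * c * q + 2 * (e - q) * c = r + 2 * e * c by ring]⟩
  by_cases hr' : r < c.natAbs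
  · exact ⟨0, by omega⟩
  -- `r = |c|` is excluded by parity
  rcases lt_or_gt_of_ne hc with hc | hc
  · exact ⟨1, by omega⟩
  · exact ⟨-1, by omega⟩

theorem exists_mem_coe_eq_diagonal {H : Subgroup (GL (Fin 2) ℤ)} (hf1 : f1U ∈ H)
    (hrbar1 : rbar1U ∈ H) {a d : ℤ} (ha : IsUnit a) (hd : IsUnit d) :
    ∃ D ∈ H, (D : Matrix (Fin 2) (Fin 2) ℤ) = !![a, 0; 0, d] := by
  have hrbar2 : f1U * rbar1U * f1U ∈ H := mul_mem (mul_mem hf1 hrbar1) hf1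
  rcases Int.isUnit_iff.1 ha with rfl | rfl <;> rcases Int.isUnit_iff.1 hd with rfl | rfl
  · exact ⟨1, one_mem H, by decide⟩
  · exact ⟨_, hrbar2, by decide⟩
  · exact ⟨_, hrbar1, by decide⟩
  · exact ⟨_, mul_mem hrbar1 hrbar2, by decide⟩

theorem mem_of_apply_one_zero_eq_zero {H : Subgroup (GL (Fin 2) ℤ)} (hf1 : f1U ∈ H)
    (hrbar1 : rbar1U ∈ H) (htau1 : tau1sqU ∈ H) {g : GL (Fin 2) ℤ} (hg : memX g)
    (hc : g 1 0 = 0) : g ∈ H := by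
  obtain ⟨ha, hd⟩ := isUnit_diag_of_apply_one_zero_eq_zero hc
  obtain ⟨D, hDH, hD⟩ := exists_mem_coe_eq_diagonal hf1 hrbar1 ha hd
  obtain ⟨m, hm⟩ : ∃ m, g 0 1 = 2 * m :=
    ⟨g 0 1 / 2, by have := hg.2; have := Int.isUnit_iff.1 hd; omega⟩
  convert mul_mem hDH (zpow_mem htau1 (g 0 0 * m))
  ext i j
  rw [coe_mul, hD, coe_tau1sqU_zpow]
  rcases Int.isUnit_iff.1 ha with ha | ha <;> fin_cases i <;> fin_cases j <;> simp [ha, hc, hm]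

theorem oddColumnSums_le {H : Subgroup (GL (Fin 2) ℤ)} (hf1 : f1U ∈ H) (hrbar1 : rbar1U ∈ H)
    (htau1 : tau1sqU ∈ H) : oddColumnSums ≤ H := by
  intro g hg
  induction hn : (g 1 0).natAbs using Nat.strong_induction_on generalizing g with
  | _ n ih =>
  by_cases hc : g 1 0 = 0
  · exact mem_of_apply_one_zero_eq_zero hf1 hrbar1 htau1 ((mem_oddColumnSums_iff g).1 hg) hc
  obtain ⟨k, hk⟩ := exists_natAbs_add_two_mul_mul_lt hc ((mem_oddColumnSums_iff g).1 hg).1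
  have hX : f1U * tau1sqU ^ k ∈ oddColumnSums :=
    mul_mem ((mem_oddColumnSums_iff _).2 ⟨by decide, by decide⟩)
      (zpow_mem ((mem_oddColumnSums_iff _).2 ⟨by decide, by decide⟩) k)
  rw [← H.mul_mem_cancel_left (mul_mem hf1 (zpow_mem htau1 k))]
  refine ih _ ?_ (mul_mem hX hg) rfl
  rwa [← hn, f1U_mul_tau1sqU_zpow_mul_apply_one_zero]

end GL2OddColumns

/-- `𝒳` is exactly the subgroup of `GL(2,ℤ)` generated by the three
order-2 matrices `f₀ = [[1,2],[0,−1]]`, `f₁ = [[0,1],[1,0]]` and `r̄₁ = [[−1,0],[0,1]]`. -/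
theorem X_eq_closure_f0_f1_rbar1 :
    f0U ^ 2 = 1 ∧ f1U ^ 2 = 1 ∧ rbar1U ^ 2 = 1 ∧
    (∀ g : Matrix.GeneralLinearGroup (Fin 2) ℤ,
      g ∈ Subgroup.closure
          ({f0U, f1U, rbar1U} : Set (Matrix.GeneralLinearGroup (Fin 2) ℤ)) ↔ memX g) := by
  set H := Subgroup.closure ({f0U, f1U, rbar1U} : Set (GL (Fin 2) ℤ))
  have hH : H = GL2OddColumns.oddColumnSums := by
    refine le_antisymm ?_ ?_
    · rw [Subgroup.closure_le]
      rintro _ (rfl | rfl | rfl) <;>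
        exact (GL2OddColumns.mem_oddColumnSums_iff _).2 ⟨by decide, by decide⟩
    · have hf1 : f1U ∈ H := Subgroup.subset_closure (by simp)
      have hrbar1 : rbar1U ∈ H := Subgroup.subset_closure (by simp)
      have htau1 : tau1sqU ∈ H := by
        rw [show tau1sqU = f1U * rbar1U * f1U * f0U by decide]
        exact mul_mem (mul_mem (mul_mem hf1 hrbar1) hf1) (Subgroup.subset_closure (by simp))
      exact GL2OddColumns.oddColumnSums_le hf1 hrbar1 htau1
  exact ⟨by decide, by decide, by decide, fun g => by rw [hH, GL2OddColumns.mem_oddColumnSums_iff]⟩
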